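/- Let s₁, s₂ be monic elements of k⟨X⟩ ⊗ k⟨Y⟩ whose leading words s̄₁, s̄₂ occur disjointly in a normal word w, i.e., w = a₁s̄₁b₁ = a₂s̄₂b₂ with s̄₁ and s̄₂ disjoint in both the X- and Y-components. Then a₁s₁b₁ - a₂s₂b₂ is a linear combination of elements c s d (s ∈ {s₁, s₂}, c, d ∈ N) with leading words strictly less than w, even in the 'crossed' case where the Y-part of s̄₂ precedes the Y-part of s̄₁ while the X-part of s̄₁ precedes that of s̄₂. -/

import Mathlib

/-- A monomial order: a well-founded strict total order compatible with multiplication. -/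
def MonOrd {M : Type*} [Monoid M] (lt : M → M → Prop) : Prop :=
  IsStrictTotalOrder M lt ∧ WellFounded lt ∧
    ∀ u v w₁ w₂ : M, lt u v → lt (w₁ * u * w₂) (w₁ * v * w₂)

/-- `m` is the leading word of `f` with respect to the order `lt`. -/
def IsLeadR {k M : Type*} [Semiring k] (lt : M → M → Prop)
    (f : MonoidAlgebra k M) (m : M) : Prop :=
  m ∈ f.coeff.support ∧ ∀ u ∈ f.coeff.support, u ≠ m → lt u m

/-- `f` is monic: its leading coefficient is `1`. -/
def MonicR {k M : Type*} [Semiring k] (lt : M → M → Prop) (f : MonoidAlgebra k M) : Prop :=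
  ∃ m, IsLeadR lt f m ∧ f.coeff m = 1

/-- The monomial `m` viewed as an element of the monoid algebra. -/
noncomputable def mono (k : Type*) {M : Type*} [Semiring k] [Monoid M] (m : M) :
    MonoidAlgebra k M := MonoidAlgebra.of k M m

/-- `h` is trivial modulo `(S, w)`: it is a linear combination `Σ αᵢ aᵢ sᵢ bᵢ`
with `sᵢ ∈ S` and leading words `aᵢ s̄ᵢ bᵢ < w`. -/
def TrivModR {k M : Type*} [Semiring k] [Monoid M] (lt : M → M → Prop)
    (S : Set (MonoidAlgebra k M)) (w : M) (h : MonoidAlgebra k M) : Prop :=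
  ∃ (n : ℕ) (α : Fin n → k) (a b : Fin n → M) (s : Fin n → MonoidAlgebra k M),
    (∀ i, s i ∈ S) ∧
    h = ∑ i, α i • (mono k (a i) * s i * mono k (b i)) ∧
    ∀ i, ∃ m, IsLeadR lt (s i) m ∧ lt (a i * m * b i) w

/-- Gröbner–Shirshov basis in a free associative algebra `k⟨Z⟩`:
all intersection and inclusion compositions are trivial. -/
def FIsGSB {k Z : Type*} [Ring k] (lt : FreeMonoid Z → FreeMonoid Z → Prop)
    (S : Set (MonoidAlgebra k (FreeMonoid Z))) : Prop :=
  (∀ s ∈ S, MonicR lt s) ∧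
  ∀ f ∈ S, ∀ g ∈ S, ∀ mf mg : FreeMonoid Z, IsLeadR lt f mf → IsLeadR lt g mg →
    ((∀ a b : FreeMonoid Z, mf * b = a * mg →
        (mf * b).length < mf.length + mg.length →
        TrivModR lt S (mf * b) (f * mono k b - mono k a * g)) ∧
     (∀ a b : FreeMonoid Z, mf = a * mg * b →
        TrivModR lt S mf (f - mono k a * g * mono k b)))

/-- the deg-lex order on words induced by an order on letters -/
def degLex {A : Type*} (ltA : A → A → Prop) (u v : FreeMonoid A) : Prop :=
  u.length < v.length ∨ (u.length = v.length ∧ List.Lex ltA u.toList v.toList)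

/-- Normal words of `k⟨X⟩ ⊗ k⟨Y⟩`: the monoid `X* × Y*`
(whose multiplication is `(u^X u^Y)(v^X v^Y) = u^X v^X u^Y v^Y`). -/
abbrev NW (X Y : Type*) := FreeMonoid X × FreeMonoid Y

/-- the (deg-)lex order on `N = X*Y*` built from orders on `X*` and `Y*`:
`u > v` iff `u^X > v^X` or (`u^X = v^X` and `u^Y > v^Y`). -/
def lexNW {X Y : Type*} (ltX : FreeMonoid X → FreeMonoid X → Prop)
    (ltY : FreeMonoid Y → FreeMonoid Y → Prop) (u v : NW X Y) : Prop :=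
  ltX u.1 v.1 ∨ (u.1 = v.1 ∧ ltY u.2 v.2)

/-- All compositions `(f,g)_w = p` in `k⟨X⟩ ⊗ k⟨Y⟩`, where `mf, mg` are the leading
words of `f, g`.  The cases are: 1.1 `X`-inclusion only, 1.2 `Y`-inclusion only,
1.3 `X,Y`-inclusion, 1.4 `X,Y`-skew-inclusion, 2.1 `X`-intersection only,
2.2 `Y`-intersection only, 2.3 `X,Y`-intersection, 2.4 `X,Y`-skew-intersection,
3.1 `X`-inclusion and `Y`-intersection, 3.2 `X`-intersection and `Y`-inclusion. -/
def IsComp {k X Y : Type*} [Ring k] (f g : MonoidAlgebra k (NW X Y))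
    (mf mg : NW X Y) (p : MonoidAlgebra k (NW X Y)) (w : NW X Y) : Prop :=
  let e : NW X Y → MonoidAlgebra k (NW X Y) := fun m => mono k m
  let fx := mf.1; let fy := mf.2; let gx := mg.1; let gy := mg.2
  -- 1.1 X-inclusion only
  (∃ (a b : FreeMonoid X) (c : FreeMonoid Y), fx = a * gx * b ∧
     ((w = (fx, fy * c * gy) ∧ p = f * e (1, c * gy) - e (a, fy * c) * g * e (b, 1)) ∨
      (w = (fx, gy * c * fy) ∧ p = e (1, gy * c) * f - e (a, 1) * g * e (b, c * fy)))) ∨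
  -- 1.2 Y-inclusion only
  (∃ (a : FreeMonoid X) (c d : FreeMonoid Y), fy = c * gy * d ∧
     ((w = (fx * a * gx, fy) ∧ p = f * e (a * gx, 1) - e (fx * a, c) * g * e (1, d)) ∨
      (w = (gx * a * fx, fy) ∧ p = e (gx * a, 1) * f - e (1, c) * g * e (a * fx, d)))) ∨
  -- 1.3 X,Y-inclusion
  (∃ (a b : FreeMonoid X) (c d : FreeMonoid Y), fx = a * gx * b ∧ fy = c * gy * d ∧
     w = (fx, fy) ∧ p = f - e (a, c) * g * e (b, d)) ∨
  -- 1.4 X,Y-skew-inclusion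
  (∃ (a b : FreeMonoid X) (c d : FreeMonoid Y), fx = a * gx * b ∧ gy = c * fy * d ∧
     w = (fx, gy) ∧ p = e (1, c) * f * e (1, d) - e (a, 1) * g * e (b, 1)) ∨
  -- 2.1 X-intersection only
  (∃ (a b : FreeMonoid X) (c : FreeMonoid Y), fx * a = b * gx ∧
     (fx * a).length < fx.length + gx.length ∧
     ((w = (fx * a, fy * c * gy) ∧ p = f * e (a, c * gy) - e (b, fy * c) * g) ∨
      (w = (fx * a, gy * c * fy) ∧
        p = e (1, gy * c) * f * e (a, 1) - e (b, 1) * g * e (1, c * fy)))) ∨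
  -- 2.2 Y-intersection only
  (∃ (a : FreeMonoid X) (c d : FreeMonoid Y), fy * c = d * gy ∧
     (fy * c).length < fy.length + gy.length ∧
     ((w = (fx * a * gx, fy * c) ∧ p = f * e (a * gx, c) - e (fx * a, d) * g) ∨
      (w = (gx * a * fx, fy * c) ∧
        p = e (gx * a, 1) * f * e (1, c) - e (1, d) * g * e (a * fx, 1)))) ∨
  -- 2.3 X,Y-intersection
  (∃ (a b : FreeMonoid X) (c d : FreeMonoid Y), fx * a = b * gx ∧ fy * c = d * gy ∧
     (fx * a).length < fx.length + gx.length ∧ (fy * c).length < fy.length + gy.length ∧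
     w = (fx * a, fy * c) ∧ p = f * e (a, c) - e (b, d) * g) ∨
  -- 2.4 X,Y-skew-intersection
  (∃ (a b : FreeMonoid X) (c d : FreeMonoid Y), fx * a = b * gx ∧ c * fy = gy * d ∧
     (fx * a).length < fx.length + gx.length ∧ (c * fy).length < fy.length + gy.length ∧
     w = (fx * a, c * fy) ∧ p = e (1, c) * f * e (a, 1) - e (b, 1) * g * e (1, d)) ∨
  -- 3.1 X-inclusion and Y-intersection
  (∃ (a b : FreeMonoid X) (c d : FreeMonoid Y), fx = a * gx * b ∧
     ((fy * c = d * gy ∧ (fy * c).length < fy.length + gy.length ∧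
        w = (fx, fy * c) ∧ p = f * e (1, c) - e (a, d) * g * e (b, 1)) ∨
      (c * fy = gy * d ∧ (c * fy).length < fy.length + gy.length ∧
        w = (fx, c * fy) ∧ p = e (1, c) * f - e (a, 1) * g * e (b, d)))) ∨
  -- 3.2 X-intersection and Y-inclusion
  (∃ (a b : FreeMonoid X) (c d : FreeMonoid Y), fx * a = b * gx ∧
     (fx * a).length < fx.length + gx.length ∧
     ((fy = c * gy * d ∧ w = (fx * a, fy) ∧ p = f * e (a, 1) - e (b, c) * g * e (1, d)) ∨
      (gy = c * fy * d ∧ w = (fx * a, gy) ∧ p = e (1, c) * f * e (a, d) - e (b, 1) * g)))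

/-- Gröbner–Shirshov basis in `k⟨X⟩ ⊗ k⟨Y⟩`: a set of monic polynomials
all of whose compositions are trivial. -/
def IsGSB {k X Y : Type*} [Ring k] (lt : NW X Y → NW X Y → Prop)
    (S : Set (MonoidAlgebra k (NW X Y))) : Prop :=
  (∀ s ∈ S, MonicR lt s) ∧
  ∀ f ∈ S, ∀ g ∈ S, ∀ (mf mg : NW X Y) (p : MonoidAlgebra k (NW X Y)) (w : NW X Y),
    IsLeadR lt f mf → IsLeadR lt g mg → IsComp f g mf mg p w → TrivModR lt S w p

/-- the abelianization map `γ : X* → [X]`, with `[X]` the free commutative monoid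
on `X` realized as `Multiplicative (Multiset X)`. -/
def gam {X : Type*} (u : FreeMonoid X) : Multiplicative (Multiset X) :=
  Multiplicative.ofAdd (↑u.toList : Multiset X)

/-- the order on `X*` lifted from a monomial order on `[X]`:
`u > v` iff `γ(u) > γ(v)`, or `γ(u) = γ(v)` and `u >_lex v`. -/
def liftOrd {X : Type*} [LinearOrder X]
    (ltC : Multiplicative (Multiset X) → Multiplicative (Multiset X) → Prop)
    (u v : FreeMonoid X) : Prop :=
  ltC (gam u) (gam v) ∨ (gam u = gam v ∧ List.Lex (· < ·) u.toList v.toList)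

/-- `δ` on monomials: the weakly increasing word representing a commutative monomial. -/
noncomputable def dword {X : Type*} [LinearOrder X] (m : Multiplicative (Multiset X)) :
    FreeMonoid X :=
  FreeMonoid.ofList (Multiset.sort (Multiplicative.toAdd m) (· ≤ ·))

/-- the lexicographic splitting `δ : k[X] → k⟨X⟩`. -/
noncomputable def deltaMap {k X : Type*} [Semiring k] [LinearOrder X]
    (f : MonoidAlgebra k (Multiplicative (Multiset X))) :
    MonoidAlgebra k (FreeMonoid X) :=
  MonoidAlgebra.ofCoeff (Finsupp.mapDomain dword f.coeff)

/-- the set `S₁ = {xᵢxⱼ - xⱼxᵢ : xᵢ > xⱼ}` of commutators in `k⟨X⟩`. -/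
noncomputable def commSet (k X : Type*) [Ring k] [LinearOrder X] :
    Set (MonoidAlgebra k (FreeMonoid X)) :=
  {p | ∃ i j : X, j < i ∧
    p = mono k (FreeMonoid.of i * FreeMonoid.of j) - mono k (FreeMonoid.of j * FreeMonoid.of i)}

/-- `U(m)`: commutative monomials in the variables strictly between the least and the
greatest variable occurring in `m`. -/
def UU {X : Type*} [LinearOrder X] (m : Multiplicative (Multiset X)) :
    Set (Multiplicative (Multiset X)) :=
  {u | ∀ y ∈ Multiplicative.toAdd u,
     (∃ z ∈ Multiplicative.toAdd m, z < y) ∧ (∃ z ∈ Multiplicative.toAdd m, y < z)}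

/-- Normal words of `k[X] ⊗ k⟨Y⟩`: the monoid `[X]Y*`. -/
abbrev CW (X Y : Type*) := Multiplicative (Multiset X) × FreeMonoid Y

/-- the order on `[X]Y*`: compare the `Y`-part first, then the `[X]`-part. -/
def cwOrd {X Y : Type*}
    (ltC : Multiplicative (Multiset X) → Multiplicative (Multiset X) → Prop)
    (ltY : FreeMonoid Y → FreeMonoid Y → Prop) (u v : CW X Y) : Prop :=
  ltY u.2 v.2 ∨ (u.2 = v.2 ∧ ltC u.1 v.1)

/-- the order on `X*Y*` lifted from the order on `[X]Y*`, breaking ties by `lex`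
on the `X`-component. -/
def liftNW {X Y : Type*} [LinearOrder X]
    (ltC : Multiplicative (Multiset X) → Multiplicative (Multiset X) → Prop)
    (ltY : FreeMonoid Y → FreeMonoid Y → Prop) (u v : NW X Y) : Prop :=
  cwOrd ltC ltY (gam u.1, u.2) (gam v.1, v.2) ∨
    ((gam u.1 = gam v.1 ∧ u.2 = v.2) ∧ List.Lex (· < ·) u.1.toList v.1.toList)

/-- `δ : k[X] ⊗ k⟨Y⟩ → k⟨X⟩ ⊗ k⟨Y⟩`, the lexicographic splitting extended by the
identity on `Y`-words. -/
noncomputable def deltaNW {k X Y : Type*} [Semiring k] [LinearOrder X]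
    (f : MonoidAlgebra k (CW X Y)) : MonoidAlgebra k (NW X Y) :=
  MonoidAlgebra.ofCoeff (Finsupp.mapDomain (fun m : CW X Y => ((dword m.1, m.2) : NW X Y)) f.coeff)

/-- Mikhalev–Zolotykh compositions in `k[X] ⊗ k⟨Y⟩`: inclusion `C₁`, overlap `C₂`
and external `C₃` compositions, where `mf`, `mg` are the leading words of `f`, `g`,
and `L = lcm(mf^X, mg^X)`. -/
def MZComp {k X Y : Type*} [Ring k] [DecidableEq X]
    (ltC : Multiplicative (Multiset X) → Multiplicative (Multiset X) → Prop)
    (f g : MonoidAlgebra k (CW X Y)) (mf mg : CW X Y)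
    (p : MonoidAlgebra k (CW X Y)) (w : CW X Y) : Prop :=
  let e : CW X Y → MonoidAlgebra k (CW X Y) := fun m => mono k m
  let fX := Multiplicative.toAdd mf.1; let gX := Multiplicative.toAdd mg.1
  let L : Multiset X := fX ∪ gX
  let Lf : Multiplicative (Multiset X) := Multiplicative.ofAdd (L - fX)
  let Lg : Multiplicative (Multiset X) := Multiplicative.ofAdd (L - gX)
  -- C₁ : inclusion
  (∃ c d : FreeMonoid Y, mf.2 = c * mg.2 * d ∧
     (mf.2 = mg.2 → (mg.1 = mf.1 ∨ ltC mg.1 mf.1)) ∧ (mg.2 = 1 → c = 1) ∧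
     w = (Multiplicative.ofAdd L, mf.2) ∧
     p = e (Lf, 1) * f - e (Lg, c) * g * e (1, d)) ∨
  -- C₂ : overlap
  (∃ c d c₀ : FreeMonoid Y, c₀ ≠ 1 ∧ mf.2 = c * c₀ ∧ mg.2 = c₀ * d ∧
     w = (Multiplicative.ofAdd L, mf.2 * d) ∧
     p = e (Lf, 1) * f * e (1, d) - e (Lg, c) * g) ∨
  -- C₃ : external
  (∃ c₀ : FreeMonoid Y, fX ∩ gX ≠ 0 ∧ mf.2 ≠ 1 ∧ mg.2 ≠ 1 ∧
     w = (Multiplicative.ofAdd L, mf.2 * c₀ * mg.2) ∧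
     p = e (Lf, 1) * f * e (1, c₀ * mg.2) - e (Lg, mf.2 * c₀) * g)

/-- Gröbner–Shirshov basis in `k[X] ⊗ k⟨Y⟩` in the sense of Mikhalev–Zolotykh. -/
def MZGSB {k X Y : Type*} [Ring k] [DecidableEq X]
    (ltC : Multiplicative (Multiset X) → Multiplicative (Multiset X) → Prop)
    (ltY : FreeMonoid Y → FreeMonoid Y → Prop)
    (S : Set (MonoidAlgebra k (CW X Y))) : Prop :=
  (∀ s ∈ S, MonicR (cwOrd ltC ltY) s) ∧
  ∀ f ∈ S, ∀ g ∈ S, ∀ (mf mg : CW X Y) (p : MonoidAlgebra k (CW X Y)) (w : CW X Y),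
    IsLeadR (cwOrd ltC ltY) f mf → IsLeadR (cwOrd ltC ltY) g mg →
    MZComp ltC f g mf mg p w → TrivModR (cwOrd ltC ltY) S w p

namespace TrivModR

variable {k M : Type*} [Monoid M] {lt : M → M → Prop} {w : M}

section Semiring

variable [Semiring k] {S : Set (MonoidAlgebra k M)}

theorem zero : TrivModR lt S w (0 : MonoidAlgebra k M) :=
  ⟨0, Fin.elim0, Fin.elim0, Fin.elim0, Fin.elim0, (·.elim0), by simp, (·.elim0)⟩

theorem single (α : k) {a b : M} {s : MonoidAlgebra k M} (hs : s ∈ S)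
    (hlt : ∃ m, IsLeadR lt s m ∧ lt (a * m * b) w) :
    TrivModR lt S w (α • (mono k a * s * mono k b)) :=
  ⟨1, fun _ => α, fun _ => a, fun _ => b, fun _ => s, fun _ => hs, by simp, fun _ => hlt⟩

theorem add {f g : MonoidAlgebra k M} (hf : TrivModR lt S w f) (hg : TrivModR lt S w g) :
    TrivModR lt S w (f + g) := by
  obtain ⟨n₁, α₁, a₁, b₁, s₁, hS₁, rfl, hlt₁⟩ := hf
  obtain ⟨n₂, α₂, a₂, b₂, s₂, hS₂, rfl, hlt₂⟩ := hg
  refine ⟨n₁ + n₂, Fin.addCases α₁ α₂, Fin.addCases a₁ a₂, Fin.addCases b₁ b₂,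
    Fin.addCases s₁ s₂, Fin.addCases (by simpa using hS₁) (by simpa using hS₂), ?_,
    Fin.addCases (by simpa using hlt₁) (by simpa using hlt₂)⟩
  simp only [Fin.sum_univ_add, Fin.addCases_left, Fin.addCases_right]

theorem sum {ι : Type*} (t : Finset ι) (α : ι → k) (a b : ι → M) (s : ι → MonoidAlgebra k M)
    (hS : ∀ i ∈ t, s i ∈ S) (hlt : ∀ i ∈ t, ∃ m, IsLeadR lt (s i) m ∧ lt (a i * m * b i) w) :
    TrivModR lt S w (∑ i ∈ t, α i • (mono k (a i) * s i * mono k (b i))) := by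
  classical
  induction t using Finset.induction_on with
  | empty => exact zero
  | insert i t hi ih =>
    rw [Finset.sum_insert hi]
    exact (single _ (hS i (t.mem_insert_self i)) (hlt i (t.mem_insert_self i))).add
      (ih (fun j hj => hS j (Finset.mem_insert_of_mem hj))
        (fun j hj => hlt j (Finset.mem_insert_of_mem hj)))

end Semiring

theorem sub [Ring k] {S : Set (MonoidAlgebra k M)} {f g : MonoidAlgebra k M}
    (hf : TrivModR lt S w f) (hg : TrivModR lt S w g) : TrivModR lt S w (f - g) := by
  obtain ⟨n, α, a, b, s, hS, rfl, hlt⟩ := hg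
  rw [sub_eq_add_neg, ← Finset.sum_neg_distrib]
  simp_rw [← neg_smul]
  exact hf.add ⟨n, fun i => -α i, a, b, s, hS, rfl, hlt⟩

end TrivModR

theorem IsLeadR.eq {k M : Type*} [Semiring k] {lt : M → M → Prop}
    (hasymm : ∀ u v, lt u v → ¬ lt v u) {f : MonoidAlgebra k M} {m m' : M}
    (hm : IsLeadR lt f m) (hm' : IsLeadR lt f m') : m = m' := by
  by_contra hne
  exact hasymm _ _ (hm'.2 m hm.1 hne) (hm.2 m' hm'.1 (Ne.symm hne))

theorem MonicR.coeff_eq_one {k M : Type*} [Semiring k] {lt : M → M → Prop}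
    (hasymm : ∀ u v, lt u v → ¬ lt v u) {f : MonoidAlgebra k M} (hf : MonicR lt f) {m : M}
    (hm : IsLeadR lt f m) : f.coeff m = 1 := by
  obtain ⟨m', hm', hcoeff⟩ := hf
  rwa [hm'.eq hasymm hm] at hcoeff

theorem mono_mul_mul_mono {k M : Type*} [Semiring k] [Monoid M] (c d : M)
    (f : MonoidAlgebra k M) :
    mono k c * f * mono k d = ∑ n ∈ f.coeff.support, f.coeff n • mono k (c * n * d) := by
  conv_lhs => rw [← MonoidAlgebra.sum_coeff_single f]
  rw [Finsupp.sum, Finset.mul_sum, Finset.sum_mul]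
  refine Finset.sum_congr rfl fun n _ => ?_
  simp [mono, MonoidAlgebra.single_mul_single, mul_assoc]

section Disjoint

variable {k M : Type*} [Monoid M]

/-- Both sides expand to `∑ s n' t n • (c₁ n * n' * d₁ n)`. -/
theorem sum_smul_mono_mul_mul_mono_comm [CommSemiring k] (s t : MonoidAlgebra k M)
    (c₁ d₁ c₂ d₂ : M → M) (hcd : ∀ n n', c₁ n * n' * d₁ n = c₂ n' * n * d₂ n') :
    ∑ n ∈ t.coeff.support, t.coeff n • (mono k (c₁ n) * s * mono k (d₁ n)) =
      ∑ n' ∈ s.coeff.support, s.coeff n' • (mono k (c₂ n') * t * mono k (d₂ n')) := by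
  simp only [mono_mul_mul_mono, Finset.smul_sum]
  rw [Finset.sum_comm]
  refine Finset.sum_congr rfl fun n' _ => Finset.sum_congr rfl fun n _ => ?_
  rw [hcd, smul_comm]

variable [CommRing k] {lt : M → M → Prop}

theorem trivModR_sum_erase_lead [DecidableEq M] {S : Set (MonoidAlgebra k M)} {w : M}
    {s t : MonoidAlgebra k M} {m m' : M} (hs : s ∈ S) (hm : IsLeadR lt s m)
    (hm' : IsLeadR lt t m') (c d : M → M) (hlt : ∀ n, lt n m' → lt (c n * m * d n) w) :
    TrivModR lt S w
      (∑ n ∈ t.coeff.support.erase m', t.coeff n • (mono k (c n) * s * mono k (d n))) :=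
  TrivModR.sum _ _ _ _ _ (fun _ _ => hs) fun n hn =>
    ⟨m, hm, hlt n (hm'.2 n (Finset.mem_of_mem_erase hn) (Finset.ne_of_mem_erase hn))⟩

/-- The functions `c₁, d₁, c₂, d₂` place a word `n` in the slot of the leading word of `s₂`
and a word `n'` in that of `s₁`; `hcd` says that the two slots do not overlap.
Expanding `s₂` around `s₁` and `s₁` around `s₂` gives the same sum, so the difference is
the two tails, whose terms are all below `w`. -/
theorem trivModR_sub_of_disjoint (hasymm : ∀ u v, lt u v → ¬ lt v u)
    (hmul : ∀ u v w₁ w₂, lt u v → lt (w₁ * u * w₂) (w₁ * v * w₂))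
    {s₁ s₂ : MonoidAlgebra k M} (h₁ : MonicR lt s₁) (h₂ : MonicR lt s₂) {m₁ m₂ : M}
    (hm₁ : IsLeadR lt s₁ m₁) (hm₂ : IsLeadR lt s₂ m₂)
    (c₁ d₁ c₂ d₂ : M → M) (hcd : ∀ n n', c₁ n * n' * d₁ n = c₂ n' * n * d₂ n') :
    TrivModR lt {s₁, s₂} (c₁ m₂ * m₁ * d₁ m₂)
      (mono k (c₁ m₂) * s₁ * mono k (d₁ m₂) - mono k (c₂ m₁) * s₂ * mono k (d₂ m₁)) := by
  classical
  have hcomm := sum_smul_mono_mul_mul_mono_comm s₁ s₂ c₁ d₁ c₂ d₂ hcd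
  have htail₁ := trivModR_sum_erase_lead (S := {s₁, s₂}) (w := c₁ m₂ * m₁ * d₁ m₂)
    (Set.mem_insert s₁ _) hm₁ hm₂ c₁ d₁ fun n hn => by
      rw [hcd, hcd m₂]
      exact hmul _ _ _ _ hn
  have htail₂ := trivModR_sum_erase_lead (S := {s₁, s₂}) (w := c₁ m₂ * m₁ * d₁ m₂)
    (Set.mem_insert_of_mem s₁ rfl) hm₂ hm₁ c₂ d₂ fun n' hn' => by
      rw [← hcd]
      exact hmul _ _ _ _ hn'
  rw [Finset.sum_erase_eq_sub hm₂.1, h₂.coeff_eq_one hasymm hm₂, one_smul] at htail₁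
  rw [Finset.sum_erase_eq_sub hm₁.1, h₁.coeff_eq_one hasymm hm₁, one_smul, ← hcomm] at htail₂
  simpa only [sub_sub_sub_cancel_left] using htail₂.sub htail₁

end Disjoint

theorem MonOrd.asymm {M : Type*} [Monoid M] {lt : M → M → Prop} (h : MonOrd lt) :
    ∀ u v, lt u v → ¬ lt v u :=
  have := h.1
  fun _ _ => _root_.asymm

section lexNW

variable {X Y : Type*} {ltX : FreeMonoid X → FreeMonoid X → Prop}
  {ltY : FreeMonoid Y → FreeMonoid Y → Prop}

theorem lexNW_asymm (hX : ∀ u v, ltX u v → ¬ ltX v u) (hY : ∀ u v, ltY u v → ¬ ltY v u)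
    (u v : NW X Y) : lexNW ltX ltY u v → ¬ lexNW ltX ltY v u := by
  rintro (h | ⟨h₁, h₂⟩) (h' | ⟨h₁', h₂'⟩)
  · exact hX _ _ h h'
  · exact hX _ _ h (h₁' ▸ h)
  · exact hX _ _ h' (h₁ ▸ h')
  · exact hY _ _ h₂ h₂'

theorem lexNW_mul_mul (hX : ∀ u v w₁ w₂, ltX u v → ltX (w₁ * u * w₂) (w₁ * v * w₂))
    (hY : ∀ u v w₁ w₂, ltY u v → ltY (w₁ * u * w₂) (w₁ * v * w₂))
    (u v w₁ w₂ : NW X Y) (h : lexNW ltX ltY u v) :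
    lexNW ltX ltY (w₁ * u * w₂) (w₁ * v * w₂) := by
  rcases h with h | ⟨h₁, h₂⟩
  · exact Or.inl (hX _ _ _ _ h)
  · exact Or.inr ⟨congrArg (w₁.1 * · * w₂.1) h₁, hY _ _ _ _ h₂⟩

end lexNW

theorem stmt_18_general {k X Y : Type*} [Field k]
    (ltX : FreeMonoid X → FreeMonoid X → Prop) (ltY : FreeMonoid Y → FreeMonoid Y → Prop)
    (hX : MonOrd ltX) (hY : MonOrd ltY)
    (s₁ s₂ : MonoidAlgebra k (NW X Y))
    (h₁ : MonicR (lexNW ltX ltY) s₁) (h₂ : MonicR (lexNW ltX ltY) s₂)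
    (m₁ m₂ : NW X Y)
    (hm₁ : IsLeadR (lexNW ltX ltY) s₁ m₁) (hm₂ : IsLeadR (lexNW ltX ltY) s₂ m₂)
    (a₁ b₁ a₂ b₂ w : NW X Y)
    (hw₁ : w = a₁ * m₁ * b₁)
    (hdisj :
      (∃ (a : FreeMonoid X) (c : FreeMonoid Y),
        a₂.1 = a₁.1 * m₁.1 * a ∧ b₁.1 = a * m₂.1 * b₂.1 ∧
        a₂.2 = a₁.2 * m₁.2 * c ∧ b₁.2 = c * m₂.2 * b₂.2) ∨
      (∃ (a : FreeMonoid X) (c : FreeMonoid Y),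
        a₂.1 = a₁.1 * m₁.1 * a ∧ b₁.1 = a * m₂.1 * b₂.1 ∧
        a₁.2 = a₂.2 * m₂.2 * c ∧ b₂.2 = c * m₁.2 * b₁.2)) :
    TrivModR (lexNW ltX ltY) {s₁, s₂} w
      (mono k a₁ * s₁ * mono k b₁ - mono k a₂ * s₂ * mono k b₂) := by
  have hasymm := lexNW_asymm hX.asymm hY.asymm
  have hmul := lexNW_mul_mul hX.2.2 hY.2.2
  subst hw₁
  rcases hdisj with ⟨a, c, ha₂x, hb₁x, ha₂y, hb₁y⟩ | ⟨a, c, ha₂x, hb₁x, ha₁y, hb₂y⟩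
  · have := trivModR_sub_of_disjoint hasymm hmul h₁ h₂ hm₁ hm₂
      (fun _ => a₁) (fun n => (a, c) * n * b₂) (fun n' => a₁ * n' * (a, c)) (fun _ => b₂)
      fun n n' => by simp only [mul_assoc]
    rwa [show (a, c) * m₂ * b₂ = b₁ from Prod.ext hb₁x.symm hb₁y.symm,
      show a₁ * m₁ * (a, c) = a₂ from Prod.ext ha₂x.symm ha₂y.symm] at this
  · have := trivModR_sub_of_disjoint hasymm hmul h₁ h₂ hm₁ hm₂
      (fun n => (a₁.1, a₂.2 * n.2 * c)) (fun n => (a * n.1 * b₂.1, b₁.2))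
      (fun n' => (a₁.1 * n'.1 * a, a₂.2)) (fun n' => (b₂.1, c * n'.2 * b₁.2))
      fun n n' => Prod.ext (by simp only [Prod.fst_mul, mul_assoc])
        (by simp only [Prod.snd_mul, mul_assoc])
    rwa [show ((a₁.1, a₂.2 * m₂.2 * c) : NW X Y) = a₁ from Prod.ext rfl ha₁y.symm,
      show ((a * m₂.1 * b₂.1, b₁.2) : NW X Y) = b₁ from Prod.ext hb₁x.symm rfl,
      show ((a₁.1 * m₁.1 * a, a₂.2) : NW X Y) = a₂ from Prod.ext ha₂x.symm rfl,
      show ((b₂.1, c * m₁.2 * b₁.2) : NW X Y) = b₂ from Prod.ext rfl hb₂y.symm] at this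

/-- disjoint case, Case 4: if the leading words of monic `s₁, s₂` occur
disjointly in `w = a₁s̄₁b₁ = a₂s̄₂b₂` (in both the `X`- and `Y`-components, including
the crossed case where the `Y`-part of `s̄₂` precedes that of `s̄₁` while the `X`-part
of `s̄₁` precedes that of `s̄₂`), then `a₁s₁b₁ - a₂s₂b₂` is a linear combination of
elements `c·s·d` with `s ∈ {s₁, s₂}` and leading words strictly less than `w`. -/
theorem stmt_18 {k X Y : Type*} [Field k]
    (ltX : FreeMonoid X → FreeMonoid X → Prop) (ltY : FreeMonoid Y → FreeMonoid Y → Prop)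
    (hX : MonOrd ltX) (hY : MonOrd ltY)
    (s₁ s₂ : MonoidAlgebra k (NW X Y))
    (h₁ : MonicR (lexNW ltX ltY) s₁) (h₂ : MonicR (lexNW ltX ltY) s₂)
    (m₁ m₂ : NW X Y)
    (hm₁ : IsLeadR (lexNW ltX ltY) s₁ m₁) (hm₂ : IsLeadR (lexNW ltX ltY) s₂ m₂)
    (a₁ b₁ a₂ b₂ w : NW X Y)
    (hw₁ : w = a₁ * m₁ * b₁) (hw₂ : w = a₂ * m₂ * b₂)
    (hdisj :
      (∃ (a : FreeMonoid X) (c : FreeMonoid Y),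
        a₂.1 = a₁.1 * m₁.1 * a ∧ b₁.1 = a * m₂.1 * b₂.1 ∧
        a₂.2 = a₁.2 * m₁.2 * c ∧ b₁.2 = c * m₂.2 * b₂.2) ∨
      (∃ (a : FreeMonoid X) (c : FreeMonoid Y),
        a₂.1 = a₁.1 * m₁.1 * a ∧ b₁.1 = a * m₂.1 * b₂.1 ∧
        a₁.2 = a₂.2 * m₂.2 * c ∧ b₂.2 = c * m₁.2 * b₁.2)) :
    TrivModR (lexNW ltX ltY) {s₁, s₂} w
      (mono k a₁ * s₁ * mono k b₁ - mono k a₂ * s₂ * mono k b₂) :=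
  stmt_18_general ltX ltY hX hY s₁ s₂ h₁ h₂ m₁ m₂ hm₁ hm₂ a₁ b₁ a₂ b₂ w hw₁ hdisj
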